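/- arXiv:0805.4269 — 3 statements merged into one kernel-verified Lean document; each statement's English description precedes it below -/
import Mathlib

section
/- Let $G$ be a finite $p$-group acting by $R$-algebra automorphisms on an $R$-algebra $M$ over a commutative ring $R$ with $pR \neq R$, such that $M$ has an $R$-basis $\mathcal{B}$ permuted by $G$. Write $ab = \sum_{c \in \mathcal{B}} \lambda_{a,b,c}\, c$ for $a, b \in \mathcal{B}$. Then for $a, b \in \mathcal{B}^G$, in the Brauer quotient one has $\mathrm{br}_G(a)\,\mathrm{br}_G(b) = \sum_{c \in \mathcal{B}^G} \pi(\lambda_{a,b,c})\, \mathrm{br}_G(c)$, where $\pi : R \to R/pR$ is the canonical map. -/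
/-!
Since `𝓑 a * 𝓑 b` is `G`-fixed and `G` permutes `𝓑`, its coefficients `λ_c` are constant on
`G`-orbits. So the part of the product supported on non-fixed basis elements splits into orbit sums
`∑_{d ∈ G • c} λ_c 𝓑 d = Tr_{G_c}^G (λ_c 𝓑 c)`, relative traces from the proper stabilizers `G_c`
of `G_c`-fixed elements, and therefore lies in `Tr(M)`.
-/

noncomputable section

section Brauer
variable (G : Type) [Group G] [Finite G] (R : Type) [CommRing R] (M : Type) [AddCommGroup M]
  [Module R M] [DistribMulAction G M] [SMulCommClass G R M]

/-- The relative trace map `Tr_H^G`, defined using the coset representatives `Quotient.out`. -/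
def relTr (H : Subgroup G) (m : M) : M := ∑ᶠ x : G ⧸ H, (Quotient.out x : G) • m

def fixedPt (H : Subgroup G) : Set M := {m | ∀ h ∈ H, h • m = m}

/-- The trace submodule `Tr(M) = ∑_{H < G} Tr_H^G(M^H)`; the Brauer quotient is
`Br_G(M) = M^G / Tr(M)`. -/
def trSub : Submodule R M :=
  Submodule.span R (⋃ H ∈ {H : Subgroup G | H ≠ ⊤}, (relTr G M H) '' (fixedPt G M H))
end Brauer

open MulAction

section TraceSubmodule

variable {G : Type} [Group G] {R : Type} [CommRing R] {M : Type} [AddCommGroup M] [Module R M]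
  [DistribMulAction G M] {ι : Type} [MulAction G ι]

lemma relTr_mem_trSub {H : Subgroup G} (hH : H ≠ ⊤) {m : M} (hm : m ∈ fixedPt G M H) :
    relTr G M H m ∈ trSub G R M :=
  Submodule.subset_span (Set.mem_biUnion hH ⟨m, hm, rfl⟩)

lemma relTr_stabilizer_eq_finsum_orbit {v : ι → M} (hv : ∀ (σ : G) (c : ι), v (σ • c) = σ • v c)
    (c : ι) : relTr G M (stabilizer G c) (v c) = ∑ᶠ d ∈ orbit G c, v d := by
  rw [relTr, ← finsum_set_coe_eq_finsum_mem,
    ← finsum_comp_equiv (orbitEquivQuotientStabilizer G c).symm]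
  refine finsum_congr fun x => ?_
  conv_rhs => rw [← QuotientGroup.out_eq' x, orbitEquivQuotientStabilizer_symm_apply]
  exact (hv _ _).symm

lemma finsum_orbit_mem_trSub {v : ι → M} (hv : ∀ (σ : G) (c : ι), v (σ • c) = σ • v c)
    {c : ι} (hc : c ∉ fixedPoints G ι) : ∑ᶠ d ∈ orbit G c, v d ∈ trSub G R M := by
  rw [← relTr_stabilizer_eq_finsum_orbit hv]
  refine relTr_mem_trSub (fun htop => hc fun σ => ?_) fun h hh => ?_
  · exact mem_stabilizer_iff.1 (htop ▸ Subgroup.mem_top σ)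
  · rw [← hv, mem_stabilizer_iff.1 hh]

lemma smul_mem_fixedPoints_iff {σ : G} {c : ι} : σ • c ∈ fixedPoints G ι ↔ c ∈ fixedPoints G ι := by
  refine ⟨fun h => ?_, fun h => (h σ).symm ▸ h⟩
  have hc : σ • c = c := by simpa using (h σ⁻¹).symm
  exact hc ▸ h

lemma sum_mem_trSub_of_notMem_fixedPoints {v : ι → M}
    (hv : ∀ (σ : G) (c : ι), v (σ • c) = σ • v c) (T : Finset ι)
    (hT : ∀ (σ : G), ∀ c ∈ T, σ • c ∈ T) (hfree : ∀ c ∈ T, c ∉ fixedPoints G ι) :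
    ∑ c ∈ T, v c ∈ trSub G R M := by
  classical
  rw [Finset.sum_partition (orbitRel G ι)]
  refine Submodule.sum_mem _ fun ω hω => ?_
  obtain ⟨c, hcT, rfl⟩ := Finset.mem_image.1 hω
  have hblock : ↑({d ∈ T | (⟦d⟧ : orbitRel.Quotient G ι) = ⟦c⟧}) = orbit G c := by
    ext d
    simp only [Finset.coe_filter, Set.mem_ofPred_eq, Quotient.eq, orbitRel_apply]
    exact ⟨And.right, fun ⟨σ, hσ⟩ => ⟨hσ ▸ hT σ c hcT, σ, hσ⟩⟩
  rw [← finsum_mem_coe_finset, hblock]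
  exact finsum_orbit_mem_trSub hv (hfree c hcT)

end TraceSubmodule

section PermutationBasis

variable {G : Type} [Group G] {R : Type} [CommRing R] {M : Type} [AddCommGroup M] [Module R M]
  [DistribMulAction G M] [SMulCommClass G R M] {ι : Type} [MulAction G ι]
  {𝓑 : Module.Basis ι R M}

lemma repr_smul_apply (h𝓑 : ∀ (σ : G) (i : ι), σ • 𝓑 i = 𝓑 (σ • i)) (σ : G) (m : M) (c : ι) :
    𝓑.repr (σ • m) c = 𝓑.repr m (σ⁻¹ • c) := by
  have h : σ⁻¹ • 𝓑 = 𝓑.reindex (toPerm σ) := by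
    ext i
    simp [h𝓑]
  simpa using congrArg (fun b => b.repr m c) h

lemma repr_apply_smul_of_forall_smul_eq (h𝓑 : ∀ (σ : G) (i : ι), σ • 𝓑 i = 𝓑 (σ • i))
    {m : M} (hm : ∀ σ : G, σ • m = m) (σ : G) (c : ι) : 𝓑.repr m (σ • c) = 𝓑.repr m c := by
  simpa [hm] using (repr_smul_apply h𝓑 σ⁻¹ m c).symm

theorem sub_finsum_fixedPoints_mem_trSub (h𝓑 : ∀ (σ : G) (i : ι), σ • 𝓑 i = 𝓑 (σ • i))
    {m : M} (hm : ∀ σ : G, σ • m = m) :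
    m - ∑ᶠ c ∈ fixedPoints G ι, 𝓑.repr m c • 𝓑 c ∈ trSub G R M := by
  classical
  set f := 𝓑.repr m
  have hf : ∀ (σ : G) (c : ι), f (σ • c) = f c := repr_apply_smul_of_forall_smul_eq h𝓑 hm
  have hm_sum : m = ∑ c ∈ f.support, f c • 𝓑 c := by
    conv_lhs => rw [← 𝓑.linearCombination_repr m]
    rfl
  have hfixed : ∑ᶠ c ∈ fixedPoints G ι, f c • 𝓑 c =
      ∑ c ∈ f.support with c ∈ fixedPoints G ι, f c • 𝓑 c := by
    refine finsum_mem_eq_sum_of_inter_support_eq _ (Set.ext fun c => ?_)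
    simp only [Set.mem_inter_iff, mem_fixedPoints, Function.mem_support, ne_eq, Finset.coe_filter,
      Finsupp.mem_support_iff, Set.mem_ofPred_eq, and_congr_left_iff, iff_and_self]
    exact fun hne _ h0 => hne (by rw [h0, zero_smul])
  rw [hfixed, hm_sum, ← Finset.sum_filter_add_sum_filter_not f.support (· ∈ fixedPoints G ι),
    add_sub_cancel_left]
  refine sum_mem_trSub_of_notMem_fixedPoints (fun σ c => ?_) _ (fun σ c hc => ?_)
    fun c hc => (Finset.mem_filter.1 hc).2
  · rw [hf, ← h𝓑]
    exact (smul_comm σ (f c) (𝓑 c)).symm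
  · simp only [Finset.mem_filter, Finsupp.mem_support_iff, hf, smul_mem_fixedPoints_iff] at hc ⊢
    exact hc

end PermutationBasis

theorem statement3_general (G : Type) [Group G]
    (R : Type) [CommRing R]
    (M : Type) [Ring M] [Algebra R M] [MulSemiringAction G M] [SMulCommClass G R M]
    (ι : Type) [MulAction G ι] (𝓑 : Module.Basis ι R M)
    (h𝓑 : ∀ (σ : G) (i : ι), σ • 𝓑 i = 𝓑 (σ • i))
    (a b : ι) (ha : ∀ σ : G, σ • a = a) (hb : ∀ σ : G, σ • b = b) :
    𝓑 a * 𝓑 b -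
      (∑ᶠ c ∈ {c : ι | ∀ σ : G, σ • c = c}, (𝓑.repr (𝓑 a * 𝓑 b)) c • 𝓑 c)
      ∈ trSub G R M :=
  sub_finsum_fixedPoints_mem_trSub h𝓑 fun σ => by rw [smul_mul', h𝓑, h𝓑, ha, hb]

theorem statement3 (p : ℕ) (hp : p.Prime) (G : Type) [Group G] [Finite G] (hG : IsPGroup p G)
    (R : Type) [CommRing R] (hpR : Ideal.span {(p : R)} ≠ ⊤)
    (M : Type) [Ring M] [Algebra R M] [MulSemiringAction G M] [SMulCommClass G R M]
    (ι : Type) [MulAction G ι] (𝓑 : Module.Basis ι R M)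
    (h𝓑 : ∀ (σ : G) (i : ι), σ • 𝓑 i = 𝓑 (σ • i))
    (a b : ι) (ha : ∀ σ : G, σ • a = a) (hb : ∀ σ : G, σ • b = b) :
    𝓑 a * 𝓑 b -
      (∑ᶠ c ∈ {c : ι | ∀ σ : G, σ • c = c}, (𝓑.repr (𝓑 a * 𝓑 b)) c • 𝓑 c)
      ∈ trSub G R M :=
  statement3_general G R M ι 𝓑 h𝓑 a b ha hb
end
end

section
/- Let $\omega$ be a $G$-orbit in $S$ such that $W_\omega$ is finite with longest element $s_\omega$. Then the fixed points of $G$ in $W_\omega$ are exactly $\{1, s_\omega\}$. -/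
/-!
A `G`-fixed `w ≠ 1` in `W_ω` has a left descent in `ω`; as `G` preserves length and is transitive
on `ω`, every `s_j` with `j ∈ ω` is then a left descent of `w`. Each `σ • s_ω` again has maximal
length in `W_ω`. Both inclusions thus reduce to: in a standard parabolic subgroup `W_I`, an element
having every `s_j`, `j ∈ I`, as a left descent is the element of maximal length. For if
`s_ω = y * w` with `y ≠ 1` and `s_j` is a right descent of `y` (`j ∈ I`), then `t = y s_j y⁻¹` is a
left inversion of `s_ω` and of `y`, and `s_j` one of `w = y⁻¹ s_ω`, against the cocycle identity
for left inversions taken modulo 2.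

Left inversions are read off Tits' permutation representation of `W` on `W × ZMod 2`, where `s_i`
conjugates the first factor and flips the sign exactly at `s_i`. This gives the strong exchange
condition and, with it, reduced words in the letters of `I` for the elements of `W_I`.
-/

noncomputable section

section Cox
variable (B W : Type) [Group W] (M : CoxeterMatrix B) (cs : CoxeterSystem M W)
  (G : Type) [Group G] [MulDistribMulAction G W]

/-- The subgroup `W^G` of `G`-fixed points of `W`. -/
def fixedSubgroup : Subgroup W where
  carrier := {w | ∀ σ : G, σ • w = w}
  mul_mem' := by intro a b ha hb; intro σ; rw [smul_mul', ha, hb]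
  one_mem' := by intro σ; exact smul_one σ
  inv_mem' := by intro a ha; intro σ; rw [smul_inv', ha]

/-- The standard parabolic subgroup `W_ω` generated by the simple reflections in the
`G`-orbit `ω` of `i`. -/
def parab [MulAction G B] (i : B) : Subgroup W :=
  Subgroup.closure (cs.simple '' MulAction.orbit G i)

/-- The set `S_G` of longest elements `s_ω` of the finite standard parabolic subgroups `W_ω`,
`ω` running over the `G`-orbits in `S`. -/
def SGset [MulAction G B] : Set W :=
  {w | ∃ i : B, w ∈ parab B W M cs G i ∧ ((parab B W M cs G i : Set W)).Finite ∧
    ∀ u ∈ parab B W M cs G i, cs.length u ≤ cs.length w}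
end Cox

namespace CoxeterSystem

variable {B W : Type*} [Group W] {M : CoxeterMatrix B} (cs : CoxeterSystem M W)

theorem prod_map_alternatingWord_two_mul {G : Type*} [Monoid G] (f : B → G) (i j : B) (p : ℕ) :
    ((alternatingWord i j (2 * p)).map f).prod = (f i * f j) ^ p := by
  induction p with
  | zero => simp [alternatingWord]
  | succ p ih =>
    rw [show 2 * (p + 1) = 2 * p + 1 + 1 by ring, alternatingWord_succ', alternatingWord_succ']
    simp [ih, pow_succ', mul_assoc, Nat.not_even_bit1]

theorem wordProd_alternatingWord_two_mul (i j : B) (p : ℕ) :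
    cs.wordProd (alternatingWord i j (2 * p)) = (cs.simple i * cs.simple j) ^ p :=
  prod_map_alternatingWord_two_mul cs.simple i j p

theorem even_count_leftInvSeq_alternatingWord [DecidableEq W] (i j : B) (t : W) :
    Even ((cs.leftInvSeq (alternatingWord i j (2 * M i j))).count t) := by
  set L := cs.leftInvSeq (alternatingWord i j (2 * M i j))
  have hL : ∀ k (hk : k < L.length), L[k] = cs.simple i * (cs.simple j * cs.simple i) ^ k := by
    intro k hk
    rw [getElem_leftInvSeq_alternatingWord cs i j _ k (by simpa [L] using hk),
      prod_alternatingWord_eq_mul_pow]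
    simp only [Nat.not_even_bit1, ↓reduceIte, mul_right_inj]
    congr 1
    omega
  -- `(s j * s i) ^ M i j = 1` makes `L` periodic of period `M i j`
  have hsplit : L = L.take (M i j) ++ L.take (M i j) := by
    refine List.ext_getElem (by simp [L]; omega) fun k _ _ => ?_
    rw [List.getElem_append]
    split_ifs with h
    · simp
    · have hm : (L.take (M i j)).length = M i j := by simp [L]; omega
      obtain ⟨r, rfl⟩ : ∃ r, k = r + M i j := ⟨k - M i j, by omega⟩
      rw [List.getElem_take, hL, hL, hm, pow_add, simple_mul_simple_pow', mul_one,
        Nat.add_sub_cancel]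
  rw [hsplit, List.count_append]
  exact ⟨_, rfl⟩

section ReflectionRepresentation

variable [DecidableEq W]

def reflPerm (i : B) : Equiv.Perm (W × ZMod 2) :=
  Equiv.prodShear (MulAut.conj (cs.simple i)).toEquiv
    fun t => Equiv.addRight (if t = cs.simple i then 1 else 0)

theorem reflPerm_apply (i : B) (t : W) (ε : ZMod 2) :
    cs.reflPerm i (t, ε) =
      (MulAut.conj (cs.simple i) t, ε + if t = cs.simple i then 1 else 0) := rfl

theorem prod_map_reflPerm_apply (ω : List B) (t : W) (ε : ZMod 2) :
    (ω.map cs.reflPerm).prod (t, ε) = (MulAut.conj (cs.wordProd ω) t,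
      ε + (cs.leftInvSeq ω).count (MulAut.conj (cs.wordProd ω) t)) := by
  induction ω with
  | nil => simp
  | cons i ω ih =>
    rw [List.map_cons, List.prod_cons, Equiv.Perm.mul_apply, ih, reflPerm_apply, wordProd_cons,
      map_mul, MulAut.mul_apply, leftInvSeq, List.count_cons,
      List.count_map_of_injective _ _ (MulAut.conj _).injective]
    have hfix (u : W) : cs.simple i = MulAut.conj (cs.simple i) u ↔ u = cs.simple i := by
      rw [MulAut.conj_apply, eq_mul_inv_iff_mul_eq, mul_right_inj, eq_comm]
    simp only [beq_iff_eq, hfix, Nat.cast_add, Nat.cast_ite, Nat.cast_one, Nat.cast_zero, add_assoc]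

theorem isLiftable_reflPerm : M.IsLiftable cs.reflPerm := fun i j => by
  ext ⟨t, ε⟩ : 1
  rw [← prod_map_alternatingWord_two_mul, prod_map_reflPerm_apply,
    wordProd_alternatingWord_two_mul, simple_mul_simple_pow,
    (ZMod.natCast_eq_zero_iff_even).mpr (cs.even_count_leftInvSeq_alternatingWord i j _)]
  simp

def reflRep : W →* Equiv.Perm (W × ZMod 2) := cs.lift ⟨cs.reflPerm, cs.isLiftable_reflPerm⟩

theorem reflRep_wordProd (ω : List B) : cs.reflRep (cs.wordProd ω) = (ω.map cs.reflPerm).prod := by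
  rw [wordProd, map_list_prod, List.map_map]
  congr 2
  funext i
  exact cs.lift_apply_simple cs.isLiftable_reflPerm i

def leftInvParity (w t : W) : ZMod 2 := (cs.reflRep w (w⁻¹ * t * w, 0)).2

theorem leftInvParity_wordProd (ω : List B) (t : W) :
    cs.leftInvParity (cs.wordProd ω) t = (cs.leftInvSeq ω).count t := by
  simp [leftInvParity, reflRep_wordProd, prod_map_reflPerm_apply, mul_assoc]

theorem reflRep_apply (w t : W) (ε : ZMod 2) :
    cs.reflRep w (t, ε) = (w * t * w⁻¹, ε + cs.leftInvParity w (w * t * w⁻¹)) := by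
  obtain ⟨ω, rfl⟩ := cs.wordProd_surjective w
  rw [reflRep_wordProd, prod_map_reflPerm_apply, leftInvParity_wordProd, MulAut.conj_apply]

theorem leftInvParity_mul (u v t : W) :
    cs.leftInvParity (u * v) t = cs.leftInvParity u t + cs.leftInvParity v (u⁻¹ * t * u) := by
  have h := congrArg Prod.snd
    (Equiv.Perm.mul_apply (cs.reflRep u) (cs.reflRep v) ((u * v)⁻¹ * t * (u * v), 0))
  simp only [← map_mul, reflRep_apply] at h
  rwa [show v * ((u * v)⁻¹ * t * (u * v)) * v⁻¹ = u⁻¹ * t * u by group,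
    show u * v * ((u * v)⁻¹ * t * (u * v)) * (u * v)⁻¹ = t by group,
    show u * (u⁻¹ * t * u) * u⁻¹ = t by group, zero_add, zero_add, add_comm] at h

theorem leftInvParity_self_of_isReflection {t : W} (ht : cs.IsReflection t) :
    cs.leftInvParity t t = 1 := by
  obtain ⟨v, i, rfl⟩ := ht
  have hone : cs.leftInvParity 1 (v * cs.simple i * v⁻¹) = 0 := by
    simpa using cs.leftInvParity_wordProd [] (v * cs.simple i * v⁻¹)
  have hsimple : cs.leftInvParity (cs.simple i) (cs.simple i) = 1 := by
    simpa using cs.leftInvParity_wordProd [i] (cs.simple i)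
  rw [← mul_inv_cancel v, leftInvParity_mul] at hone
  rw [leftInvParity_mul, leftInvParity_mul]
  rw [show v⁻¹ * (v * cs.simple i * v⁻¹) * v = cs.simple i by group] at hone ⊢
  rw [show (v * cs.simple i)⁻¹ * (v * cs.simple i * v⁻¹) * (v * cs.simple i) = cs.simple i by
    group, hsimple, add_right_comm, hone, zero_add]

theorem mem_leftInvSeq_of_leftInvParity_eq_one {ω : List B} {t : W}
    (h : cs.leftInvParity (cs.wordProd ω) t = 1) : t ∈ cs.leftInvSeq ω := by
  rw [leftInvParity_wordProd, ZMod.natCast_eq_one_iff_odd] at h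
  exact List.count_pos_iff.mp h.pos

theorem isLeftInversion_of_leftInvParity_eq_one {w t : W} (h : cs.leftInvParity w t = 1) :
    cs.IsLeftInversion w t := by
  obtain ⟨ω, hω, rfl⟩ := cs.exists_isReduced w
  exact cs.isLeftInversion_of_mem_leftInvSeq hω (cs.mem_leftInvSeq_of_leftInvParity_eq_one h)

theorem leftInvParity_eq_one_iff {w t : W} (ht : cs.IsReflection t) :
    cs.leftInvParity w t = 1 ↔ cs.IsLeftInversion w t := by
  refine ⟨cs.isLeftInversion_of_leftInvParity_eq_one, fun hinv => ?_⟩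
  by_contra hne
  have hzero : cs.leftInvParity w t = 0 := (by decide : ∀ x : ZMod 2, x ≠ 1 → x = 0) _ hne
  have hlt := (cs.isLeftInversion_of_leftInvParity_eq_one (w := t * w) (t := t) (by
    rw [leftInvParity_mul, leftInvParity_self_of_isReflection cs ht, ht.inv,
      show t * t * t = t by rw [ht.mul_self, one_mul], hzero, add_zero])).2
  rw [← mul_assoc, ht.mul_self, one_mul] at hlt
  exact lt_asymm hlt hinv.2

end ReflectionRepresentation

theorem exists_mul_wordProd_eq_wordProd_eraseIdx {ω : List B} {t : W}
    (ht : cs.IsLeftInversion (cs.wordProd ω) t) :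
    ∃ r < ω.length, t * cs.wordProd ω = cs.wordProd (ω.eraseIdx r) := by
  classical
  obtain ⟨r, hr, rfl⟩ := List.mem_iff_getElem.mp <| cs.mem_leftInvSeq_of_leftInvParity_eq_one <|
    (cs.leftInvParity_eq_one_iff ht.1).mpr ht
  exact ⟨r, by simpa using hr, by rw [← List.getD_eq_getElem _ 1, getD_leftInvSeq_mul_wordProd]⟩

section Parabolic

variable {I : Set B}

theorem exists_isReduced_of_mem_closure {w : W} (hw : w ∈ Subgroup.closure (cs.simple '' I)) :
    ∃ ω : List B, (∀ j ∈ ω, j ∈ I) ∧ cs.IsReduced ω ∧ w = cs.wordProd ω := by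
  have step : ∀ j ∈ I, ∀ ω : List B, (∀ k ∈ ω, k ∈ I) → cs.IsReduced ω →
      ∃ ψ : List B, (∀ k ∈ ψ, k ∈ I) ∧ cs.IsReduced ψ ∧
        cs.simple j * cs.wordProd ω = cs.wordProd ψ := by
    intro j hj ω hωI hω
    rcases cs.length_simple_mul (cs.wordProd ω) j with hup | hdown
    · refine ⟨j :: ω, ?_, ?_, cs.wordProd_cons j ω⟩
      · simpa [hj] using hωI
      · rw [IsReduced, cs.wordProd_cons, hup, hω.eq, List.length_cons]
    · obtain ⟨r, hr, heq⟩ := cs.exists_mul_wordProd_eq_wordProd_eraseIdx (ω := ω)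
        ⟨cs.isReflection_simple j, by omega⟩
      refine ⟨ω.eraseIdx r, fun k hk => hωI k ((List.eraseIdx_sublist ω r).subset hk), ?_, heq⟩
      have := cs.length_wordProd_le (ω.eraseIdx r)
      rw [IsReduced, ← heq, List.length_eraseIdx_of_lt hr]
      rw [hω.eq] at hdown
      omega
  induction hw using Subgroup.closure_induction_left with
  | one => exact ⟨[], by simp, by simp [IsReduced], rfl⟩
  | mul_left x hx y _ ih =>
    obtain ⟨j, hj, rfl⟩ := hx
    obtain ⟨ω, hωI, hω, rfl⟩ := ih
    exact step j hj ω hωI hω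
  | inv_mul_cancel x hx y _ ih =>
    obtain ⟨j, hj, rfl⟩ := hx
    obtain ⟨ω, hωI, hω, rfl⟩ := ih
    rw [cs.inv_simple]
    exact step j hj ω hωI hω

theorem exists_isLeftDescent_of_mem_closure {w : W} (hw : w ∈ Subgroup.closure (cs.simple '' I))
    (hne : w ≠ 1) : ∃ j ∈ I, cs.IsLeftDescent w j := by
  obtain ⟨_ | ⟨j, ω⟩, hωI, hω, rfl⟩ := cs.exists_isReduced_of_mem_closure hw
  · exact absurd rfl hne
  · refine ⟨j, hωI j List.mem_cons_self, ?_⟩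
    have := cs.length_wordProd_le ω
    rw [IsLeftDescent, wordProd_cons, ← mul_assoc, simple_mul_simple_self, one_mul, ← wordProd_cons,
      hω.eq, List.length_cons]
    omega

theorem exists_isRightDescent_of_mem_closure {w : W} (hw : w ∈ Subgroup.closure (cs.simple '' I))
    (hne : w ≠ 1) : ∃ j ∈ I, cs.IsRightDescent w j := by
  obtain ⟨j, hj, hdesc⟩ := cs.exists_isLeftDescent_of_mem_closure (inv_mem hw) (inv_ne_one.mpr hne)
  exact ⟨j, hj, cs.isLeftDescent_inv_iff.mp hdesc⟩

theorem isLeftDescent_of_forall_length_le {s : W} (hs : s ∈ Subgroup.closure (cs.simple '' I))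
    (hlong : ∀ u ∈ Subgroup.closure (cs.simple '' I), cs.length u ≤ cs.length s) {j : B}
    (hj : j ∈ I) : cs.IsLeftDescent s j :=
  lt_of_le_of_ne (hlong _ (mul_mem (Subgroup.subset_closure ⟨j, hj, rfl⟩) hs))
    (cs.length_simple_mul_ne s j)

theorem eq_of_forall_isLeftDescent {s w : W} (hs : s ∈ Subgroup.closure (cs.simple '' I))
    (hlong : ∀ u ∈ Subgroup.closure (cs.simple '' I), cs.length u ≤ cs.length s)
    (hw : w ∈ Subgroup.closure (cs.simple '' I)) (hdesc : ∀ j ∈ I, cs.IsLeftDescent w j) :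
    w = s := by
  classical
  obtain ⟨y, rfl⟩ : ∃ y, s = y * w := ⟨s * w⁻¹, by group⟩
  rcases eq_or_ne y 1 with rfl | hy1
  · rw [one_mul]
  have hy : y ∈ Subgroup.closure (cs.simple '' I) := by simpa using mul_mem hs (inv_mem hw)
  obtain ⟨j, hj, hyj⟩ := cs.exists_isRightDescent_of_mem_closure hy hy1
  have ht : cs.IsReflection (y * cs.simple j * y⁻¹) := (cs.isReflection_simple j).conj y
  have hinv_yw : cs.IsLeftInversion (y * w) (y * cs.simple j * y⁻¹) := ⟨ht, lt_of_le_of_ne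
    (hlong _ (mul_mem (mul_mem (mul_mem hy (Subgroup.subset_closure ⟨j, hj, rfl⟩)) (inv_mem hy))
      hs)) (ht.length_mul_right_ne _)⟩
  have hinv_y : cs.IsLeftInversion y (y * cs.simple j * y⁻¹) :=
    ⟨ht, by rwa [inv_mul_cancel_right]⟩
  have hinv_w : cs.IsLeftInversion w (cs.simple j) :=
    (cs.isLeftInversion_simple_iff_isLeftDescent w j).mpr (hdesc j hj)
  have hcocycle := cs.leftInvParity_mul y w (y * cs.simple j * y⁻¹)
  rw [show y⁻¹ * (y * cs.simple j * y⁻¹) * y = cs.simple j by group,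
    (cs.leftInvParity_eq_one_iff ht).mpr hinv_yw, (cs.leftInvParity_eq_one_iff ht).mpr hinv_y,
    (cs.leftInvParity_eq_one_iff (cs.isReflection_simple j)).mpr hinv_w] at hcocycle
  exact absurd hcocycle (by decide)

theorem eq_of_forall_length_le {s w : W} (hs : s ∈ Subgroup.closure (cs.simple '' I))
    (hlong_s : ∀ u ∈ Subgroup.closure (cs.simple '' I), cs.length u ≤ cs.length s)
    (hw : w ∈ Subgroup.closure (cs.simple '' I))
    (hlong_w : ∀ u ∈ Subgroup.closure (cs.simple '' I), cs.length u ≤ cs.length w) : w = s :=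
  cs.eq_of_forall_isLeftDescent hs hlong_s hw fun _ hj ↦
    cs.isLeftDescent_of_forall_length_le hw hlong_w hj

end Parabolic

section Symmetry

variable {G : Type*} [Group G] [MulDistribMulAction G W] [MulAction G B]

theorem smul_wordProd (hact : ∀ (σ : G) (i : B), σ • cs.simple i = cs.simple (σ • i)) (σ : G)
    (ω : List B) : σ • cs.wordProd ω = cs.wordProd (ω.map (σ • ·)) := by
  induction ω with
  | nil => simp
  | cons i ω ih => rw [wordProd_cons, smul_mul', ih, hact, List.map_cons, wordProd_cons]

theorem length_smul (hact : ∀ (σ : G) (i : B), σ • cs.simple i = cs.simple (σ • i)) (σ : G)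
    (w : W) : cs.length (σ • w) = cs.length w := by
  have hle (τ : G) (v : W) : cs.length (τ • v) ≤ cs.length v := by
    obtain ⟨ω, hω, rfl⟩ := cs.exists_isReduced v
    rw [cs.smul_wordProd hact, hω.eq]
    simpa using cs.length_wordProd_le (ω.map (τ • ·))
  refine le_antisymm (hle σ w) ?_
  simpa using hle σ⁻¹ (σ • w)

theorem isLeftDescent_smul_smul_iff (hact : ∀ (σ : G) (i : B), σ • cs.simple i = cs.simple (σ • i))
    (σ : G) (w : W) (j : B) : cs.IsLeftDescent (σ • w) (σ • j) ↔ cs.IsLeftDescent w j := by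
  rw [IsLeftDescent, IsLeftDescent, ← hact, ← smul_mul', cs.length_smul hact, cs.length_smul hact]

theorem smul_mem_closure (hact : ∀ (σ : G) (i : B), σ • cs.simple i = cs.simple (σ • i))
    {I : Set B} (hI : ∀ (σ : G), ∀ j ∈ I, σ • j ∈ I) (σ : G) {w : W}
    (hw : w ∈ Subgroup.closure (cs.simple '' I)) : σ • w ∈ Subgroup.closure (cs.simple '' I) := by
  induction hw using Subgroup.closure_induction with
  | mem x hx =>
    obtain ⟨j, hj, rfl⟩ := hx
    rw [hact]
    exact Subgroup.subset_closure ⟨σ • j, hI σ j hj, rfl⟩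
  | one => rw [smul_one]; exact one_mem _
  | mul x y _ _ hx hy => rw [smul_mul']; exact mul_mem hx hy
  | inv x _ hx => rw [smul_inv']; exact inv_mem hx

end Symmetry

end CoxeterSystem

theorem statement9_general (B W : Type) [Group W] (M : CoxeterMatrix B) (cs : CoxeterSystem M W)
    (G : Type) [Group G] [MulDistribMulAction G W] [MulAction G B]
    (hact : ∀ (σ : G) (i : B), σ • cs.simple i = cs.simple (σ • i))
    (i : B)
    (s : W) (hs : s ∈ parab B W M cs G i)
    (hlong : ∀ u ∈ parab B W M cs G i, cs.length u ≤ cs.length s) :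
    {w : W | w ∈ parab B W M cs G i ∧ ∀ σ : G, σ • w = w} = {1, s} := by
  have horbit : ∀ (σ : G), ∀ j ∈ MulAction.orbit G i, σ • j ∈ MulAction.orbit G i := by
    rintro σ _ ⟨g, rfl⟩
    exact ⟨σ * g, mul_smul σ g i⟩
  ext w
  simp only [Set.mem_insert_iff, Set.mem_singleton_iff]
  constructor
  · rintro ⟨hw, hfix⟩
    refine or_iff_not_imp_left.mpr fun hne => cs.eq_of_forall_isLeftDescent hs hlong hw ?_
    obtain ⟨_, ⟨g₀, rfl⟩, hdesc⟩ := cs.exists_isLeftDescent_of_mem_closure hw hne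
    rintro _ ⟨g, rfl⟩
    have := (cs.isLeftDescent_smul_smul_iff hact (g * g₀⁻¹) w (g₀ • i)).mpr hdesc
    rwa [hfix, smul_smul, inv_mul_cancel_right] at this
  · rintro (rfl | rfl)
    · exact ⟨one_mem _, smul_one⟩
    · refine ⟨hs, fun σ => cs.eq_of_forall_length_le hs hlong
        (cs.smul_mem_closure hact horbit σ hs) fun u hu => ?_⟩
      rw [cs.length_smul hact]
      exact hlong u hu

theorem statement9 (B W : Type) [Group W] (M : CoxeterMatrix B) (cs : CoxeterSystem M W)
    (G : Type) [Group G] [MulDistribMulAction G W] [MulAction G B]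
    (hact : ∀ (σ : G) (i : B), σ • cs.simple i = cs.simple (σ • i))
    (i : B) (hfin : ((parab B W M cs G i : Set W)).Finite)
    (s : W) (hs : s ∈ parab B W M cs G i)
    (hlong : ∀ u ∈ parab B W M cs G i, cs.length u ≤ cs.length s) :
    {w : W | w ∈ parab B W M cs G i ∧ ∀ σ : G, σ • w = w} = {1, s} :=
  statement9_general B W M cs G hact i s hs hlong
end
end

section
/- Let $\mathrm{can}_G : \mathcal{H}_G \to \mathrm{Br}_G(\mathcal{H})$ be the canonical algebra morphism. If $h \in \mathcal{H}_G$ and $h' \in \mathcal{H}^G$ satisfy $\mathrm{can}_G(h) = \mathrm{br}_G(h')$, then $\tau_G(h) \equiv \tau(h') \pmod{pA}$, where $\tau$ and $\tau_G$ are the standard trace forms. -/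
/-!
The coefficient of `T_1` is a linear form on `𝓗` that is invariant under `G`, because `G`
permutes the standard basis and fixes `1`. Hence it sends `Tr_K^G(m)` to `[G : K] τ(m)`, and
`[G : K]` is divisible by `p` for every proper subgroup `K` of the `p`-group `G`; so `τ` maps
`Tr(𝓗)` into `pA`. Finally `can_G` sends the basis `(T_w^G)` injectively to `(T_w)` with
`T_1^G ↦ T_1`, so `τ ∘ can_G = τ_G`.
-/

noncomputable section

noncomputable section

noncomputable section
open scoped Classical

section HeckeDefs
variable (Γ : Type) [AddCommGroup Γ] [LinearOrder Γ] [IsOrderedAddMonoid Γ]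

/-- The ring `A = ℤ[Γ]`, written exponentially. -/
abbrev AΓ := AddMonoidAlgebra ℤ Γ

/-- `e^γ ∈ A`. -/
def eΓ (γ : Γ) : AΓ Γ := AddMonoidAlgebra.single γ 1

/-- The involution `a ↦ ā` of `A = ℤ[Γ]`, `e^γ ↦ e^{-γ}`. -/
def barA : AΓ Γ →+ AΓ Γ := (AddMonoidAlgebra.coeffAddEquiv : AΓ Γ ≃+ (Γ →₀ ℤ)).symm.toAddMonoidHom.comp
  ((Finsupp.mapDomain.addMonoidHom (fun γ : Γ => -γ)).comp
    (AddMonoidAlgebra.coeffAddEquiv : AΓ Γ ≃+ (Γ →₀ ℤ)).toAddMonoidHom)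

/-- `A_{<0}`: elements of `A` supported in negative degrees. -/
def Aneg : Set (AΓ Γ) := {a | ∀ γ ∈ a.coeff.support, γ < 0}

/-- The degree of an element of `A` (`⊥` for `0`). -/
def degA (a : AΓ Γ) : WithBot Γ := a.coeff.support.sup (fun γ => (γ : WithBot Γ))

/-- A bundle consisting of the Hecke algebra data of a weighted Coxeter group `(W, len, φ)`
over `A = ℤ[Γ]`: the standard basis `T`, the bar involution, and the Kazhdan–Lusztig
basis `C`, with their defining properties. -/
structure HeckeData (W : Type) [Group W] (len : W → ℕ) (φ : W → Γ)
    (H : Type) [Ring H] [Algebra (AΓ Γ) H] where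
  /-- the standard basis `(T_w)` -/
  T : Module.Basis W (AΓ Γ) H
  T_one : T 1 = 1
  T_mul : ∀ x y : W, len (x * y) = len x + len y → T x * T y = T (x * y)
  T_quad : ∀ s : W, len s = 1 →
    (T s - algebraMap (AΓ Γ) H (eΓ Γ (φ s))) * (T s + algebraMap (AΓ Γ) H (eΓ Γ (-φ s))) = 0
  /-- the bar involution of `H` -/
  bar : H →+ H
  bar_smul : ∀ (a : AΓ Γ) (h : H), bar (a • h) = barA Γ a • bar h
  bar_mul : ∀ h h' : H, bar (h * h') = bar h * bar h'
  bar_T : ∀ w : W, bar (T w) * T w⁻¹ = 1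
  /-- the Kazhdan–Lusztig basis `(C_w)` -/
  C : Module.Basis W (AΓ Γ) H
  C_bar : ∀ w, bar (C w) = C w
  C_T : ∀ w v : W, (T.repr (C w) v - if v = w then 1 else 0) ∈ Aneg Γ

variable {Γ} {W : Type} [Group W] {len : W → ℕ} {φ : W → Γ}
  {H : Type} [Ring H] [Algebra (AΓ Γ) H]

/-- The standard trace `τ(h) = ` coefficient of `T_1` in `h`. -/
def HeckeData.τ (HD : HeckeData Γ W len φ H) (h : H) : AΓ Γ := HD.T.repr h 1

/-- The structure constants `h_{x,y,z}` : `C_x C_y = ∑_z h_{x,y,z} C_z`. -/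
def HeckeData.hc (HD : HeckeData Γ W len φ H) (x y z : W) : AΓ Γ :=
  HD.C.repr (HD.C x * HD.C y) z

/-- `γ_{x,y,u}`: the coefficient of `e^{𝐚(u⁻¹)}` in `h_{x,y,u⁻¹}`. -/
def HeckeData.gam (HD : HeckeData Γ W len φ H) (af : W → Γ) (x y u : W) : ℤ :=
  (HD.hc x y u⁻¹).coeff (af u⁻¹)

/-- Boundedness of the weighted Coxeter group (Lusztig's conjecture 13.4). -/
def HeckeData.Bounded (HD : HeckeData Γ W len φ H) : Prop :=
  ∃ γ0 : Γ, ∀ x y z : W, degA Γ (HD.τ (HD.T x * HD.T y * HD.T z)) ≤ (γ0 : WithBot Γ)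

/-- `af` is Lusztig's `𝐚`-function: `𝐚(z) = max_{x,y} deg h_{x,y,z}`. -/
def HeckeData.IsAF (HD : HeckeData Γ W len φ H) (af : W → Γ) : Prop :=
  ∀ z : W, (∃ x y, degA Γ (HD.hc x y z) = (af z : WithBot Γ)) ∧
    ∀ x y, degA Γ (HD.hc x y z) ≤ (af z : WithBot Γ)

/-- `Δf` is the function `Δ`: `Δ(w) = - deg τ(C_w)`. -/
def HeckeData.IsDelta (HD : HeckeData Γ W len φ H) (Δf : W → Γ) : Prop :=
  ∀ w : W, degA Γ (HD.τ (HD.C w)) = ((-Δf w : Γ) : WithBot Γ)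

/-- `n_w`: the coefficient of `e^{-Δ(w)}` in `τ(C_w)`. -/
def HeckeData.nC (HD : HeckeData Γ W len φ H) (Δf : W → Γ) (w : W) : ℤ :=
  (HD.τ (HD.C w)).coeff (-Δf w)

/-- The set `𝒟 = {w | 𝐚(w) = Δ(w)}` of Duflo involutions. -/
def HeckeData.Duflo (HD : HeckeData Γ W len φ H) (af Δf : W → Γ) : Set W :=
  {z | af z = Δf z}

/-- The Kazhdan–Lusztig preorder `≤_L`. -/
def HeckeData.preL (HD : HeckeData Γ W len φ H) : W → W → Prop :=
  Relation.ReflTransGen (fun x y => ∃ z, HD.hc z y x ≠ 0)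

/-- The Kazhdan–Lusztig preorder `≤_R`. -/
def HeckeData.preR (HD : HeckeData Γ W len φ H) : W → W → Prop :=
  Relation.ReflTransGen (fun x y => ∃ z, HD.hc y z x ≠ 0)

/-- The Kazhdan–Lusztig preorder `≤_{LR}`. -/
def HeckeData.preLR (HD : HeckeData Γ W len φ H) : W → W → Prop :=
  Relation.ReflTransGen (fun x y => (∃ z, HD.hc z y x ≠ 0) ∨ (∃ z, HD.hc y z x ≠ 0))

/-- Left-cell equivalence `∼_L`. -/
def HeckeData.simL (HD : HeckeData Γ W len φ H) (x y : W) : Prop := HD.preL x y ∧ HD.preL y x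

/-- Right-cell equivalence `∼_R`. -/
def HeckeData.simR (HD : HeckeData Γ W len φ H) (x y : W) : Prop := HD.preR x y ∧ HD.preR y x

/-- Two-sided cell equivalence `∼_{LR}`. -/
def HeckeData.simLR (HD : HeckeData Γ W len φ H) (x y : W) : Prop :=
  HD.preLR x y ∧ HD.preLR y x

/-- Lusztig's conjectures `(P_1)`, `(P_2)`, `(P_3)`, `(P_4)`. -/
def HeckeData.P1to4 (HD : HeckeData Γ W len φ H) (af Δf : W → Γ) : Prop :=
  (∀ z : W, af z ≤ Δf z) ∧
  (∀ d ∈ HD.Duflo af Δf, ∀ x y : W, HD.gam af x y d ≠ 0 → x = y⁻¹) ∧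
  (∀ y : W, ∃! d : W, d ∈ HD.Duflo af Δf ∧ HD.gam af y⁻¹ y d ≠ 0) ∧
  (∀ z' z : W, HD.preLR z' z → af z ≤ af z')

/-- Lusztig's conjecture `(P_9)`. -/
def HeckeData.P9 (HD : HeckeData Γ W len φ H) (af : W → Γ) : Prop :=
  ∀ z' z : W, HD.preL z' z → af z' = af z → HD.simL z' z

/-- Lusztig's conjecture `(P_13)`. -/
def HeckeData.P13 (HD : HeckeData Γ W len φ H) (af Δf : W → Γ) : Prop :=
  (∀ y : W, ∃! d : W, d ∈ HD.Duflo af Δf ∧ HD.simL d y) ∧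
  (∀ y d : W, d ∈ HD.Duflo af Δf → HD.simL d y → HD.gam af y⁻¹ y d ≠ 0)
end HeckeDefs


namespace Module.Basis

variable {ι κ R M N : Type*} [CommSemiring R] [AddCommMonoid M] [Module R M]
  [AddCommMonoid N] [Module R N]

theorem repr_constr_comp_apply (b : Basis ι R M) (b' : Basis κ R N) {f : ι → κ}
    (hf : Function.Injective f) (u : M) (i : ι) :
    b'.repr (b.constr R (b' ∘ f) u) (f i) = b.repr u i := by
  have hcoord : b'.coord (f i) ∘ₗ b.constr R (b' ∘ f) = b.coord i :=
    b.ext fun j => by simp [Finsupp.single_apply_left hf]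
  exact LinearMap.congr_fun hcoord u

theorem repr_smul_apply_smul {G : Type*} [Group G] [MulAction G ι] [DistribMulAction G M]
    [SMulCommClass G R M] (b : Basis ι R M) (hb : ∀ (σ : G) (i : ι), σ • b i = b (σ • i))
    (σ : G) (m : M) (i : ι) : b.repr (σ • m) (σ • i) = b.repr m i := by
  have hcoord : b.coord (σ • i) ∘ₗ DistribSMul.toLinearMap R M σ = b.coord i :=
    b.ext fun j => by simp [hb, Finsupp.single_apply_left (MulAction.injective σ)]
  exact LinearMap.congr_fun hcoord m

end Module.Basis

theorem IsPGroup.dvd_index_of_ne_top {p : ℕ} [Fact p.Prime] {G : Type*} [Group G]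
    (hG : IsPGroup p G) {K : Subgroup G} [K.FiniteIndex] (hK : K ≠ ⊤) : p ∣ K.index := by
  obtain ⟨n, hn⟩ := hG.index K
  have hn0 : n ≠ 0 := by
    rintro rfl
    exact hK (Subgroup.index_eq_one.mp (by simpa using hn))
  exact hn ▸ dvd_pow_self p hn0

section Brauer

variable {G R M : Type} [Group G] [Finite G] [CommRing R] [AddCommGroup M] [Module R M]
  [DistribMulAction G M]

theorem map_relTr_of_smul_invariant {N : Type*} [AddCommMonoid N] (L : M →+ N)
    (hL : ∀ (σ : G) (m : M), L (σ • m) = L m) (K : Subgroup G) (m : M) :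
    L (relTr G M K m) = K.index • L m := by
  have := Fintype.ofFinite (G ⧸ K)
  simp only [relTr, finsum_eq_sum_of_fintype, map_sum, hL, Finset.sum_const, Finset.card_univ,
    Subgroup.index, Nat.card_eq_fintype_card]

theorem trSub_le_comap_span_prime {p : ℕ} [Fact p.Prime] (hG : IsPGroup p G) (L : M →ₗ[R] R)
    (hL : ∀ (σ : G) (m : M), L (σ • m) = L m) :
    trSub G R M ≤ Submodule.comap L (Ideal.span {(p : R)}) := by
  refine Submodule.span_le.mpr ?_
  simp only [Set.iUnion_subset_iff, Set.image_subset_iff]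
  intro K hK m _
  rw [Set.mem_preimage, SetLike.mem_coe, Submodule.mem_comap, Ideal.mem_span_singleton]
  rw [← L.toAddMonoidHom_coe, map_relTr_of_smul_invariant _ hL, nsmul_eq_mul]
  exact (Nat.cast_dvd_cast (hG.dvd_index_of_ne_top hK)).mul_right _

end Brauer

theorem statement11_general
    (p : ℕ) (hp : p.Prime)
    (Γ : Type) [AddCommGroup Γ] [LinearOrder Γ] [IsOrderedAddMonoid Γ]
    (B W : Type) [Group W] (M : CoxeterMatrix B) (cs : CoxeterSystem M W)
    (φ : W → Γ)
    (G : Type) [Group G] [Finite G] (hG : IsPGroup p G)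
    [MulDistribMulAction G W]
    (H : Type) [Ring H] [Algebra (AΓ Γ) H]
    (HD : HeckeData Γ W cs.length φ H)
    [MulSemiringAction G H] [SMulCommClass G (AΓ Γ) H]
    (hGT : ∀ (σ : G) (w : W), σ • HD.T w = HD.T (σ • w))
    (ι : Type) (M' : CoxeterMatrix ι) (cs' : CoxeterSystem M' (fixedSubgroup W G))
    (HG : Type) [Ring HG] [Algebra (AΓ Γ) HG]
    (HDG : HeckeData Γ (fixedSubgroup W G) cs'.length (fun w => φ (w : W)) HG)
    :
    ∀ (u : HG) (h' : H), (∀ σ : G, σ • h' = h') →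
      (HDG.T.constr (AΓ Γ) fun w => HD.T (w : W)) u - h' ∈ trSub G (AΓ Γ) H →
      HDG.τ u - HD.τ h' ∈ Ideal.span {(p : AΓ Γ)} := by
  intro u h' _ hmem
  have := Fact.mk hp
  have hτ_smul (σ : G) (m : H) : HD.T.coord 1 (σ • m) = HD.T.coord 1 m := by
    simpa using HD.T.repr_smul_apply_smul hGT σ m 1
  have hτ_can : HD.τ (HDG.T.constr (AΓ Γ) (fun w => HD.T (w : W)) u) = HDG.τ u :=
    HDG.T.repr_constr_comp_apply HD.T Subtype.val_injective u 1
  have hτ_tr := trSub_le_comap_span_prime hG (HD.T.coord 1) hτ_smul hmem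
  rwa [Submodule.mem_comap, map_sub, Module.Basis.coord_apply, Module.Basis.coord_apply,
    ← HeckeData.τ, ← HeckeData.τ, hτ_can] at hτ_tr

theorem statement11
    (p : ℕ) (hp : p.Prime)
    (Γ : Type) [AddCommGroup Γ] [LinearOrder Γ] [IsOrderedAddMonoid Γ]
    (B W : Type) [Group W] (M : CoxeterMatrix B) (cs : CoxeterSystem M W)
    (φ : W → Γ)
    (hφ : ∀ w w' : W, cs.length (w * w') = cs.length w + cs.length w' →
      φ (w * w') = φ w + φ w')
    (hφpos : ∀ s : W, cs.length s = 1 → 0 < φ s)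
    (G : Type) [Group G] [Finite G] (hG : IsPGroup p G)
    [MulDistribMulAction G W] [MulAction G B]
    (hact : ∀ (σ : G) (i : B), σ • cs.simple i = cs.simple (σ • i))
    (hφinv : ∀ (σ : G) (w : W), φ (σ • w) = φ w)
    (H : Type) [Ring H] [Algebra (AΓ Γ) H]
    (HD : HeckeData Γ W cs.length φ H)
    [MulSemiringAction G H] [SMulCommClass G (AΓ Γ) H]
    (hGT : ∀ (σ : G) (w : W), σ • HD.T w = HD.T (σ • w))
    (ι : Type) (M' : CoxeterMatrix ι) (cs' : CoxeterSystem M' (fixedSubgroup W G))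
    (hS : Set.range (fun i => (cs'.simple i : W)) = SGset B W M cs G)
    (HG : Type) [Ring HG] [Algebra (AΓ Γ) HG]
    (HDG : HeckeData Γ (fixedSubgroup W G) cs'.length (fun w => φ (w : W)) HG)
    :
    ∀ (u : HG) (h' : H), (∀ σ : G, σ • h' = h') →
      (HDG.T.constr (AΓ Γ) fun w => HD.T (w : W)) u - h' ∈ trSub G (AΓ Γ) H →
      HDG.τ u - HD.τ h' ∈ Ideal.span {(p : AΓ Γ)} :=
  statement11_general p hp Γ B W M cs φ G hG H HD hGT ι M' cs' HG HDG
end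
end
end
end
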